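/- Let α be a nonzero algebraic number, R a complete residue system mod α in ℤ[α], and J the associated backward division map. Then the following are equivalent: (i) ℤ[α] = R[α] and 0 ∈ R; (ii) for every β ∈ ℤ[α] the sequence (J^{(n)}(β))_{n≥0} is eventually periodic and ℘ = {0}. -/

import Mathlib

/-!
Since `R` is a complete residue system, `J` strips off the lowest digit of an `R`-expansion:
`J (r + α γ) = γ`. Hence the `J`-orbit of every `β ∈ R[α]` reaches `0`; conversely, if `0 ∈ R`,
every `β ∈ ℤ[α]` whose orbit reaches `0` lies in `R[α]`. Moreover `0 ∈ R` iff `J 0 = 0`. So `(α, R)` is a number system iff every orbit in `ℤ[α]` runs into the fixed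
point `0`, and for a self-map of an invariant set this is the same as all orbits being
eventually periodic with `0` the only periodic point.
-/

open Polynomial

/-- `ℤ[α]`: the set of values `P(α)` for `P ∈ ℤ[x]`. -/
def Zadj (α : ℂ) : Set ℂ := {z | ∃ P : ℤ[X], aeval α P = z}

/-- `F[α]`: the set of all sums `Σ_{j=0}^{n} f_j α^j` with `n ∈ ℕ` and `f_0, …, f_n ∈ F`. -/
def repSet (α : ℂ) (F : Set ℂ) : Set ℂ :=
  {z | ∃ (n : ℕ) (f : ℕ → ℂ), (∀ j ≤ n, f j ∈ F) ∧
    z = ∑ j ∈ Finset.range (n + 1), f j * α ^ j}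

/-- `R` is a complete residue system mod `α` in `ℤ[α]`: `R ⊆ ℤ[α]` and every `β ∈ ℤ[α]`
is congruent modulo the ideal `αℤ[α]` to exactly one element of `R`. -/
def IsCRS (α : ℂ) (R : Set ℂ) : Prop :=
  R ⊆ Zadj α ∧ ∀ β ∈ Zadj α, ∃! r, r ∈ R ∧ ∃ γ ∈ Zadj α, β - r = α * γ

/-- `J` is the backward division map associated to the CRS `R`:
for every `β ∈ ℤ[α]`, `J β ∈ ℤ[α]` and `β = r + α · J β` for some `r ∈ R`. -/
def IsJmap (α : ℂ) (R : Set ℂ) (J : ℂ → ℂ) : Prop :=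
  ∀ β ∈ Zadj α, J β ∈ Zadj α ∧ ∃ r ∈ R, β = r + α * J β

/-- `℘`: the set of periodic elements of `ℤ[α]` under `J`. -/
def perSet (α : ℂ) (J : ℂ → ℂ) : Set ℂ :=
  {β ∈ Zadj α | ∃ n : ℕ, 1 ≤ n ∧ J^[n] β = β}

/-- The orbit of `β` under `J` is eventually periodic. -/
def EvPeriodic (J : ℂ → ℂ) (β : ℂ) : Prop :=
  ∃ (k m : ℕ), 1 ≤ m ∧ J^[k + m] β = J^[k] β

theorem Set.MapsTo.reaches_fixedPt_iff {X : Type*} {f : X → X} {S : Set X} {x₀ : X}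
    (hS : Set.MapsTo f S S) (hx₀ : x₀ ∈ S) :
    (f x₀ = x₀ ∧ ∀ x ∈ S, ∃ N, f^[N] x = x₀) ↔
      ((∀ x ∈ S, ∃ k m : ℕ, 1 ≤ m ∧ f^[k + m] x = f^[k] x) ∧
        {x ∈ S | ∃ n : ℕ, 1 ≤ n ∧ f^[n] x = x} = {x₀}) := by
  constructor
  · rintro ⟨hfix, hreach⟩
    refine ⟨fun x hx => ?_, ?_⟩
    · obtain ⟨N, hN⟩ := hreach x hx
      exact ⟨N, 1, le_rfl, by rw [Function.iterate_succ_apply', hN, hfix]⟩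
    ext x
    refine ⟨?_, ?_⟩
    · rintro ⟨hx, n, hn, hper⟩
      obtain ⟨N, hN⟩ := hreach x hx
      -- `x` returns to itself at time `n * N ≥ N`, by which it has already reached `x₀`.
      have hret : f^[n * N] x = x := (show Function.IsPeriodicPt f n x from hper).mul_const N
      have hle : N ≤ n * N := Nat.le_mul_of_pos_left N hn
      rw [← Nat.sub_add_cancel hle, Function.iterate_add_apply, hN,
        Function.iterate_fixed hfix] at hret
      exact hret.symm
    · rintro rfl
      exact ⟨hx₀, 1, le_rfl, hfix⟩
  · rintro ⟨hev, hper⟩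
    have hperiodic : ∀ x ∈ S, ∀ n, 1 ≤ n → f^[n] x = x → x = x₀ := fun x hx n hn h =>
      (Set.ext_iff.mp hper x).mp ⟨hx, n, hn, h⟩
    obtain ⟨-, p, hp, hx₀p⟩ := (Set.ext_iff.mp hper x₀).mpr rfl
    have hfix : f x₀ = x₀ := hperiodic _ (hS hx₀) p hp <| by
      rw [← Function.iterate_succ_apply, Function.iterate_succ_apply', hx₀p]
    refine ⟨hfix, fun x hx => ?_⟩
    obtain ⟨k, m, hm, hkm⟩ := hev x hx
    refine ⟨k, hperiodic _ (hS.iterate k hx) m hm ?_⟩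
    rw [← Function.iterate_add_apply, add_comm, hkm]

theorem Zadj_eq_range (α : ℂ) : Zadj α = ((aeval α : ℤ[X] →ₐ[ℤ] ℂ).range : Set ℂ) := rfl

theorem zero_mem_Zadj (α : ℂ) : (0 : ℂ) ∈ Zadj α := ⟨0, map_zero _⟩

theorem sum_mul_pow_mem_Zadj {α : ℂ} {s : Finset ℕ} {f : ℕ → ℂ}
    (hf : ∀ j ∈ s, f j ∈ Zadj α) : ∑ j ∈ s, f j * α ^ j ∈ Zadj α := by
  have hα : α ∈ Zadj α := ⟨X, aeval_X α⟩
  rw [Zadj_eq_range] at hf hα ⊢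
  exact Subalgebra.sum_mem _ fun j hj =>
    Subalgebra.mul_mem _ (hf j hj) (Subalgebra.pow_mem _ hα j)

theorem repSet_subset_Zadj {α : ℂ} {R : Set ℂ} (hR : R ⊆ Zadj α) : repSet α R ⊆ Zadj α := by
  rintro _ ⟨n, f, hf, rfl⟩
  exact sum_mul_pow_mem_Zadj fun j hj => hR (hf j (Finset.mem_range_succ_iff.mp hj))

theorem sum_range_succ_mul_pow (α : ℂ) (f : ℕ → ℂ) (n : ℕ) :
    ∑ j ∈ Finset.range (n + 1), f j * α ^ j =
      f 0 + α * ∑ j ∈ Finset.range n, f (j + 1) * α ^ j := by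
  rw [Finset.sum_range_succ', Finset.mul_sum, add_comm]
  simp only [pow_succ, pow_zero, mul_one]
  congr 1
  exact Finset.sum_congr rfl fun j _ => by ring

theorem zero_mem_repSet {α : ℂ} {R : Set ℂ} (h0R : (0 : ℂ) ∈ R) : (0 : ℂ) ∈ repSet α R :=
  ⟨0, fun _ => 0, fun _ _ => h0R, by simp⟩

theorem add_mul_mem_repSet {α r x : ℂ} {R : Set ℂ} (hr : r ∈ R) (hx : x ∈ repSet α R) :
    r + α * x ∈ repSet α R := by
  obtain ⟨n, f, hf, rfl⟩ := hx
  refine ⟨n + 1, fun j => if j = 0 then r else f (j - 1), fun j hj => ?_, ?_⟩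
  · cases j with
    | zero => simpa using hr
    | succ j => simpa using hf j (by omega)
  · rw [sum_range_succ_mul_pow α (fun j => if j = 0 then r else f (j - 1)) (n + 1)]
    simp

namespace IsJmap

variable {α : ℂ} {R : Set ℂ} {J : ℂ → ℂ}

theorem mapsTo (hJ : IsJmap α R J) : Set.MapsTo J (Zadj α) (Zadj α) := fun _ hβ => (hJ _ hβ).1

/-- `R` being a complete residue system pins down the digit `r`, and then `γ` by cancelling
`α ≠ 0`. -/
theorem apply_eq (h0 : α ≠ 0) (hR : IsCRS α R) (hJ : IsJmap α R J) {β r γ : ℂ}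
    (hβ : β ∈ Zadj α) (hr : r ∈ R) (hγ : γ ∈ Zadj α) (heq : β = r + α * γ) : J β = γ := by
  obtain ⟨hJβ, r', hr', heq'⟩ := hJ β hβ
  obtain ⟨r₀, -, huniq⟩ := hR.2 β hβ
  have hr'₀ : r' = r₀ := huniq r' ⟨hr', J β, hJβ, by linear_combination heq'⟩
  have hr₀ : r = r₀ := huniq r ⟨hr, γ, hγ, by linear_combination heq⟩
  subst hr'₀ hr₀
  exact mul_left_cancel₀ h0 (by linear_combination heq - heq')

theorem apply_zero_eq_zero_iff (h0 : α ≠ 0) (hR : IsCRS α R) (hJ : IsJmap α R J) :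
    J 0 = 0 ↔ (0 : ℂ) ∈ R := by
  refine ⟨fun hJ0 => ?_, fun h0R =>
    hJ.apply_eq h0 hR (zero_mem_Zadj α) h0R (zero_mem_Zadj α) (by ring)⟩
  obtain ⟨-, r, hr, heq⟩ := hJ 0 (zero_mem_Zadj α)
  rw [hJ0, mul_zero, add_zero] at heq
  rwa [heq]

theorem iterate_sum_mul_pow (h0 : α ≠ 0) (hR : IsCRS α R) (hJ : IsJmap α R J) (n : ℕ)
    {f : ℕ → ℂ} (hf : ∀ j < n, f j ∈ R) : J^[n] (∑ j ∈ Finset.range n, f j * α ^ j) = 0 := by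
  induction n generalizing f with
  | zero => simp
  | succ n ih =>
    have hZ : ∀ j < n + 1, f j ∈ Zadj α := fun j hj => hR.1 (hf j hj)
    have hJsum : J (∑ j ∈ Finset.range (n + 1), f j * α ^ j) =
        ∑ j ∈ Finset.range n, f (j + 1) * α ^ j :=
      hJ.apply_eq h0 hR (sum_mul_pow_mem_Zadj fun j hj => hZ j (Finset.mem_range.mp hj))
        (hf 0 n.succ_pos)
        (sum_mul_pow_mem_Zadj fun j hj => hZ (j + 1) (by simpa using hj))
        (sum_range_succ_mul_pow α f n)
    rw [Function.iterate_succ_apply, hJsum]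
    exact ih fun j hj => hf (j + 1) (by omega)

theorem exists_iterate_eq_zero (h0 : α ≠ 0) (hR : IsCRS α R) (hJ : IsJmap α R J) {β : ℂ}
    (hβ : β ∈ repSet α R) : ∃ N, J^[N] β = 0 := by
  obtain ⟨n, f, hf, rfl⟩ := hβ
  exact ⟨n + 1, hJ.iterate_sum_mul_pow h0 hR (n + 1) fun j hj => hf j (by omega)⟩

theorem mem_repSet_of_iterate_eq_zero (hJ : IsJmap α R J) (h0R : (0 : ℂ) ∈ R) (N : ℕ)
    {β : ℂ} (hβ : β ∈ Zadj α) (hN : J^[N] β = 0) : β ∈ repSet α R := by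
  induction N generalizing β with
  | zero =>
    rw [Function.iterate_zero_apply] at hN
    exact hN ▸ zero_mem_repSet h0R
  | succ N ih =>
    obtain ⟨hJβ, r, hr, heq⟩ := hJ β hβ
    exact heq ▸ add_mul_mem_repSet hr (ih hJβ hN)

theorem number_system_iff_reaches_zero (h0 : α ≠ 0) (hR : IsCRS α R) (hJ : IsJmap α R J) :
    (repSet α R = Zadj α ∧ (0 : ℂ) ∈ R) ↔ (J 0 = 0 ∧ ∀ β ∈ Zadj α, ∃ N, J^[N] β = 0) := by
  rw [hJ.apply_zero_eq_zero_iff h0 hR]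
  refine ⟨fun ⟨hrep, h0R⟩ => ⟨h0R, fun β hβ => ?_⟩, fun ⟨h0R, hreach⟩ => ⟨?_, h0R⟩⟩
  · exact hJ.exists_iterate_eq_zero h0 hR (hrep ▸ hβ)
  · refine (repSet_subset_Zadj hR.1).antisymm fun β hβ => ?_
    obtain ⟨N, hN⟩ := hreach β hβ
    exact hJ.mem_repSet_of_iterate_eq_zero h0R N hβ hN

end IsJmap

theorem number_system_iff_perSet_zero_general (α : ℂ) (h0 : α ≠ 0)
    (R : Set ℂ) (hR : IsCRS α R) (J : ℂ → ℂ) (hJ : IsJmap α R J) :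
    (repSet α R = Zadj α ∧ (0 : ℂ) ∈ R) ↔
      ((∀ β ∈ Zadj α, EvPeriodic J β) ∧ perSet α J = {0}) :=
  (hJ.number_system_iff_reaches_zero h0 hR).trans
    (hJ.mapsTo.reaches_fixedPt_iff (zero_mem_Zadj α))

/-- Corollary 1: `(α, R)` is a number system (i.e. `ℤ[α] = R[α]` and `0 ∈ R`) if and only
if every orbit of `J` is eventually periodic and `℘ = {0}`. -/
theorem number_system_iff_perSet_zero (α : ℂ) (hα : IsAlgebraic ℚ α) (h0 : α ≠ 0)
    (R : Set ℂ) (hR : IsCRS α R) (J : ℂ → ℂ) (hJ : IsJmap α R J) :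
    (repSet α R = Zadj α ∧ (0 : ℂ) ∈ R) ↔
      ((∀ β ∈ Zadj α, EvPeriodic J β) ∧ perSet α J = {0}) :=
  number_system_iff_perSet_zero_general α h0 R hR J hJ
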